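/- arXiv:2502.07426 — 3 statements merged into one kernel-verified Lean document; each statement's English description precedes it below -/
import Mathlib

section
/- Let (T,ℓ) be a rooted binary phylogenetic X-tree with |X| = n. Then the set P(T,ℓ) = {(φ(x_1),…,φ(x_n)) : φ is a diversity index of (T,ℓ)} is a polytope in ℝ^n (a bounded intersection of finitely many closed half-spaces), and for every x ∈ X there exist non-negative real numbers LB(x,T) and UB(x,T) such that LB(x,T) ≤ φ(x) ≤ UB(x,T) for every diversity index φ of (T,ℓ). -/
open scoped Classical

/-- Data of a rooted tree: a finite vertex set, a root, and a parent map
(edges are directed away from the root; the parent of the root is the root itself). -/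
structure PreTree (V : Type*) where
  verts : Finset V
  root : V
  par : V → V

namespace PreTree

variable {V : Type*}

/-- `T` is a well-formed rooted tree. -/
def IsTree (T : PreTree V) : Prop :=
  T.root ∈ T.verts ∧ (∀ v ∈ T.verts, T.par v ∈ T.verts) ∧ T.par T.root = T.root ∧
    ∀ v ∈ T.verts, ∃ n : ℕ, T.par^[n] v = T.root

/-- The edges of `T`, identified with their head (the endpoint further from the root):
every non-root vertex `v` yields the edge `(par v, v)`. -/
noncomputable def edges (T : PreTree V) : Finset V := T.verts.erase T.root

/-- The children of a vertex `v`. -/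
noncomputable def children (T : PreTree V) (v : V) : Finset V :=
  T.verts.filter fun w => w ≠ T.root ∧ T.par w = v

/-- The leaves (taxa) of `T`: vertices of out-degree `0`. -/
noncomputable def leaves (T : PreTree V) : Finset V :=
  T.verts.filter fun v => T.children v = ∅

/-- `T` is a rooted binary `X`-tree: a rooted tree in which the root has out-degree `2`
and every other vertex has out-degree `0` (a leaf) or `2`. -/
def IsBinaryTree (T : PreTree V) : Prop :=
  T.IsTree ∧ (∀ v ∈ T.verts, (T.children v).card = 0 ∨ (T.children v).card = 2) ∧
    (T.children T.root).card = 2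

/-- `x` lies (weakly) below `v`, i.e. `v` is on the directed path from the root to `x`. -/
def below (T : PreTree V) (x v : V) : Prop := ∃ n : ℕ, T.par^[n] x = v

/-- The leaf set `X[v]` of the pendant subtree `T[v]`. -/
noncomputable def clade (T : PreTree V) (v : V) : Finset V :=
  T.leaves.filter fun x => T.below x v

/-- The phylogenetic diversity of `Y ⊆ X`: the total length of the edges of the
minimal subtree of `T` connecting the root to all leaves in `Y`. -/
noncomputable def PD (T : PreTree V) (ℓ : V → ℝ) (Y : Finset V) : ℝ :=
  ∑ e ∈ T.edges.filter (fun e => ∃ x ∈ Y, T.below x e), ℓ e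

/-- The diversity-index score `φ(x) = ∑_{e ∈ E(T)} γ(x,e)·ℓ(e)`. -/
noncomputable def score (T : PreTree V) (ℓ : V → ℝ) (γ : V → V → ℝ) (x : V) : ℝ :=
  ∑ e ∈ T.edges, γ x e * ℓ e

/-- The vertex set of the pendant subtree `T[v]`. -/
noncomputable def desc (T : PreTree V) (v : V) : Finset V :=
  T.verts.filter fun w => T.below w v

/-- An isomorphism of tree shapes from the pendant subtree `T[v₁]` to `T[v₂]`. -/
def IsShapeIso (T : PreTree V) (v₁ v₂ : V) (f : V → V) : Prop :=
  f v₁ = v₂ ∧ Set.BijOn f (T.desc v₁ : Set V) ((T.desc v₂ : Set V)) ∧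
    ∀ w ∈ T.desc v₁, w ≠ v₁ → f (T.par w) = T.par (f w)

/-- `γ` are the coefficients of a diversity index of `(T, ℓ)`: they are non-negative and
satisfy descent, neutrality and convexity. -/
def IsDivIndex (T : PreTree V) (ℓ : V → ℝ) (γ : V → V → ℝ) : Prop :=
  (∀ x e, 0 ≤ γ x e) ∧
  (∀ x : V, ∀ e ∈ T.edges, x ∉ T.clade e → γ x e = 0) ∧
  (∀ e₁ ∈ T.edges, ∀ e₂ ∈ T.edges, ∀ f : V → V, T.IsShapeIso e₁ e₂ f →
      ∀ x ∈ T.clade e₁, γ x e₁ = γ (f x) e₂) ∧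
  (∑ x ∈ T.leaves, T.score ℓ γ x = T.PD ℓ T.leaves)

/-- The allocation property: each edge distributes exactly its own length,
`∑_{x ∈ X[v]} γ(x,(u,v)) = 1` for every edge `(u,v)`. -/
def Allocation (T : PreTree V) (γ : V → V → ℝ) : Prop :=
  ∀ e ∈ T.edges, ∑ x ∈ T.clade e, γ x e = 1

/-- The set `P(T,ℓ)` of score vectors of the diversity indices of `(T,ℓ)`, viewed in the
euclidean space `ℝ^X` indexed by the taxa. -/
noncomputable def indexScores (T : PreTree V) (ℓ : V → ℝ) : Set ((↥T.leaves) → ℝ) :=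
  {s | ∃ γ : V → V → ℝ, T.IsDivIndex ℓ γ ∧ ∀ x : ↥T.leaves, s x = T.score ℓ γ (x : V)}

end PreTree

/-!
The score vector of a diversity index is the image of its coefficient vector `γ` under the
linear map `γ ↦ (∑ₑ γ(x,e) ℓ(e))ₓ`. Only the finitely many coefficients `γ(x,e)` with `x` a vertex
and `e` an edge matter, and on these the axioms of a diversity index are finitely many linear
constraints: non-negativity, descent (some coefficients vanish), neutrality (some coefficients
coincide) and convexity (one linear equation). So `P(T,ℓ)` is a linear image of a polyhedron,
hence a polyhedron by Fourier–Motzkin elimination. Since the scores are non-negative and sum to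
`PD(X)`, every score lies in `[0, PD(X)]`.
-/

theorem exists_mem_upperBounds_inter_lowerBounds {α : Type*} [ConditionallyCompleteLattice α]
    {s t : Set α} (hs : BddAbove s) (ht : BddBelow t) (hst : ∀ x ∈ s, ∀ y ∈ t, x ≤ y) :
    (upperBounds s ∩ lowerBounds t).Nonempty := by
  rcases s.eq_empty_or_nonempty with rfl | hne
  · simpa [BddBelow] using ht
  · exact ⟨sSup s, fun x hx => le_csSup hs hx, fun y hy => csSup_le hne fun x hx => hst x hx y hy⟩

theorem exists_forall_mul_le_iff {ι : Type*} [Finite ι] (c r : ι → ℝ) :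
    (∃ t, ∀ i, c i * t ≤ r i) ↔
      (∀ i, c i = 0 → 0 ≤ r i) ∧ ∀ i j, 0 < c i → c j < 0 → c j * r i ≤ c i * r j := by
  constructor
  · rintro ⟨t, ht⟩
    refine ⟨fun i hi => by simpa [hi] using ht i, fun i j hi hj => ?_⟩
    nlinarith [ht i, ht j]
  · rintro ⟨hzero, hpair⟩
    set lo := {x | ∃ j, c j < 0 ∧ r j / c j = x}
    set hi := {y | ∃ i, 0 < c i ∧ r i / c i = y}
    have hlo : lo.Finite := (Set.finite_range fun j => r j / c j).subset fun _ ⟨j, _, h⟩ => ⟨j, h⟩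
    have hhi : hi.Finite := (Set.finite_range fun i => r i / c i).subset fun _ ⟨i, _, h⟩ => ⟨i, h⟩
    obtain ⟨t, hlot, hhit⟩ := exists_mem_upperBounds_inter_lowerBounds hlo.bddAbove hhi.bddBelow
      (by
        rintro _ ⟨j, hj, rfl⟩ _ ⟨i, hi, rfl⟩
        rw [← neg_div_neg_eq, div_le_div_iff₀ (neg_pos.2 hj) hi]
        linarith [hpair i j hi hj])
    refine ⟨t, fun i => ?_⟩
    rcases lt_trichotomy (c i) 0 with hneg | hz | hpos
    · have := hlot ⟨i, hneg, rfl⟩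
      rwa [div_le_iff_of_neg hneg, mul_comm] at this
    · simpa [hz] using hzero i hz
    · have := hhit ⟨i, hpos, rfl⟩
      rwa [le_div_iff₀ hpos, mul_comm] at this

section Polyhedron

open Matrix

variable {β : Type*} [Fintype β]

def IsPolyhedron (P : Set (β → ℝ)) : Prop :=
  ∃ (m : ℕ) (a : Fin m → β → ℝ) (b : Fin m → ℝ), P = ⋂ i, {z | a i ⬝ᵥ z ≤ b i}

theorem isPolyhedron_iInter_dotProduct_le {ι : Type*} [Finite ι] (a : ι → β → ℝ) (b : ι → ℝ) :
    IsPolyhedron (⋂ i, {z : β → ℝ | a i ⬝ᵥ z ≤ b i}) := by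
  obtain ⟨m, ⟨e⟩⟩ := Finite.exists_equiv_fin ι
  exact ⟨m, a ∘ e.symm, b ∘ e.symm,
    (e.symm.surjective.iInter_comp fun i => {z : β → ℝ | a i ⬝ᵥ z ≤ b i}).symm⟩

theorem isPolyhedron_halfspace (a : β → ℝ) (b : ℝ) : IsPolyhedron {z | a ⬝ᵥ z ≤ b} := by
  simpa only [Set.iInter_const] using
    isPolyhedron_iInter_dotProduct_le (fun _ : Unit => a) (fun _ => b)

theorem IsPolyhedron.iInter {ι : Sort*} [Finite ι] {P : ι → Set (β → ℝ)}
    (hP : ∀ i, IsPolyhedron (P i)) : IsPolyhedron (⋂ i, P i) := by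
  choose m a b hP using hP
  have := isPolyhedron_iInter_dotProduct_le (fun p : Σ i : PLift ι, Fin (m i.down) => a _ p.2)
    (fun p => b _ p.2)
  rw [Set.iInter_sigma] at this
  rw [← Equiv.plift.surjective.iInter_comp P]
  simpa only [Equiv.plift_apply, hP] using this

theorem IsPolyhedron.inter {P Q : Set (β → ℝ)} (hP : IsPolyhedron P) (hQ : IsPolyhedron Q) :
    IsPolyhedron (P ∩ Q) := by
  rw [Set.inter_eq_iInter]
  exact .iInter fun b => by cases b <;> assumption

theorem isPolyhedron_hyperplane (a : β → ℝ) (b : ℝ) : IsPolyhedron {z | a ⬝ᵥ z = b} := by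
  convert (isPolyhedron_halfspace a b).inter (isPolyhedron_halfspace (-a) (-b)) using 1
  ext z
  simp [neg_dotProduct, le_antisymm_iff]

theorem isPolyhedron_singleton (c : β → ℝ) : IsPolyhedron {c} := by
  convert IsPolyhedron.iInter fun i => isPolyhedron_hyperplane (Pi.single i 1) (c i) using 1
  ext z
  simp [single_dotProduct, funext_iff]

theorem isPolyhedron_setOf_nonneg (i : β) : IsPolyhedron {z : β → ℝ | 0 ≤ z i} := by
  simpa [neg_dotProduct, single_dotProduct] using isPolyhedron_halfspace (-Pi.single i 1) 0

theorem isPolyhedron_setOf_eq_zero (i : β) : IsPolyhedron {z : β → ℝ | z i = 0} := by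
  simpa [single_dotProduct] using isPolyhedron_hyperplane (Pi.single i 1) 0

theorem isPolyhedron_setOf_eq (i j : β) : IsPolyhedron {z : β → ℝ | z i = z j} := by
  convert isPolyhedron_hyperplane (Pi.single i 1 - Pi.single j 1) 0 using 1
  ext z
  simp [sub_dotProduct, single_dotProduct, sub_eq_zero]

theorem IsPolyhedron.preimage {α : Type*} [Fintype α] {P : Set (β → ℝ)} (hP : IsPolyhedron P)
    (L : (α → ℝ) →ₗ[ℝ] β → ℝ) : IsPolyhedron (L ⁻¹' P) := by
  obtain ⟨m, a, b, rfl⟩ := hP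
  have hL : ∀ i z, a i ⬝ᵥ L z = (a i ᵥ* LinearMap.toMatrix' L) ⬝ᵥ z := fun i z => by
    rw [← dotProduct_mulVec, LinearMap.toMatrix'_mulVec]
  simp only [Set.preimage_iInter, Set.preimage_ofPred_eq, hL]
  exact isPolyhedron_iInter_dotProduct_le _ _

theorem dotProduct_update (a z : β → ℝ) (k : β) (t : ℝ) :
    a ⬝ᵥ Function.update z k t = Function.update a k 0 ⬝ᵥ z + a k * t := by
  rw [dotProduct, dotProduct, Fintype.sum_eq_add_sum_compl k, Fintype.sum_eq_add_sum_compl k]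
  simp only [Function.update_self, zero_mul, zero_add, add_comm (a k * t)]
  congr 1
  exact Finset.sum_congr rfl fun j hj => by
    rw [Finset.mem_compl, Finset.mem_singleton] at hj
    simp [hj]

/-- Fourier–Motzkin elimination of the coordinate `k`. -/
theorem IsPolyhedron.exists_update {P : Set (β → ℝ)} (hP : IsPolyhedron P) (k : β) :
    IsPolyhedron {z | ∃ t, Function.update z k t ∈ P} := by
  obtain ⟨m, a, b, rfl⟩ := hP
  set A := fun i => Function.update (a i) k 0
  have hset : {z | ∃ t, Function.update z k t ∈ ⋂ i, {z | a i ⬝ᵥ z ≤ b i}} =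
      (⋂ i, ⋂ (_ : a i k = 0), {z | A i ⬝ᵥ z ≤ b i}) ∩
        ⋂ i, ⋂ j, ⋂ (_ : 0 < a i k), ⋂ (_ : a j k < 0),
          {z | (a i k • A j - a j k • A i) ⬝ᵥ z ≤ a i k * b j - a j k * b i} := by
    ext z
    simp only [Set.mem_ofPred_eq, Set.mem_iInter, Set.mem_inter_iff, dotProduct_update,
      ← le_sub_iff_add_le', sub_dotProduct, smul_dotProduct, smul_eq_mul]
    rw [exists_forall_mul_le_iff]
    refine and_congr (forall₂_congr fun i _ => sub_nonneg) (forall₄_congr fun i j _ _ => ?_)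
    constructor <;> intro h <;> linarith
  rw [hset]
  exact .inter (.iInter fun i => .iInter fun _ => isPolyhedron_halfspace _ _)
    (.iInter fun i => .iInter fun j => .iInter fun _ => .iInter fun _ => isPolyhedron_halfspace _ _)

theorem IsPolyhedron.exists_eqOn_compl {P : Set (β → ℝ)} (hP : IsPolyhedron P) (A : Finset β) :
    IsPolyhedron {z | ∃ w ∈ P, Set.EqOn w z (↑A)ᶜ} := by
  induction A using Finset.induction_on with
  | empty => simpa [Set.eqOn_univ] using hP
  | insert k A _ ih =>
    convert ih.exists_update k using 1
    ext z
    constructor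
    · rintro ⟨w, hw, hwz⟩
      refine ⟨w k, w, hw, fun j hj => ?_⟩
      rcases eq_or_ne j k with rfl | hjk
      · simp
      · simpa [hjk] using hwz (by simpa [hjk] using hj)
    · rintro ⟨t, w, hw, hwz⟩
      refine ⟨w, hw, fun j hj => ?_⟩
      simp only [Finset.coe_insert, Set.mem_compl_iff, Set.mem_insert_iff, not_or] at hj
      simpa [hj.1] using hwz hj.2

theorem IsPolyhedron.image_linearMap {α : Type*} [Fintype α] {P : Set (β → ℝ)}
    (hP : IsPolyhedron P) (L : (β → ℝ) →ₗ[ℝ] α → ℝ) : IsPolyhedron (L '' P) := by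
  -- `L '' P` is the graph of `L` over `P`, with its `β`-coordinates eliminated.
  set fst := LinearMap.funLeft ℝ ℝ (Sum.inl : α → α ⊕ β)
  set snd := LinearMap.funLeft ℝ ℝ (Sum.inr : β → α ⊕ β)
  have hgraph : IsPolyhedron (snd ⁻¹' P ∩ (fst - L ∘ₗ snd) ⁻¹' {0}) :=
    (hP.preimage _).inter ((isPolyhedron_singleton 0).preimage _)
  convert (hgraph.exists_eqOn_compl (Finset.univ.map .inr)).preimage
    ((LinearEquiv.sumArrowLequivProdArrow α β ℝ ℝ).symm.toLinearMap ∘ₗ LinearMap.inl ℝ _ _)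
    using 1
  ext s
  simp only [Finset.coe_map, Finset.coe_univ, Set.image_univ, Function.Embedding.inr_apply,
    Set.compl_range_inr, Set.eqOn_range]
  have hJ : (LinearEquiv.sumArrowLequivProdArrow α β ℝ ℝ).symm (s, 0) ∘ Sum.inl = s := rfl
  simp only [Set.mem_image, Set.mem_preimage, Set.mem_ofPred_eq, Set.mem_inter_iff,
    Set.mem_singleton_iff, LinearMap.comp_apply, LinearMap.inl_apply, LinearEquiv.coe_coe, hJ,
    LinearMap.sub_apply, sub_eq_zero]
  constructor
  · rintro ⟨x, hx, rfl⟩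
    exact ⟨Sum.elim (L x) x, ⟨hx, rfl⟩, rfl⟩
  · rintro ⟨w, ⟨hw, hfst⟩, rfl⟩
    exact ⟨snd w, hw, hfst.symm⟩

end Polyhedron

namespace PreTree

variable {V : Type*} (T : PreTree V) (ℓ : V → ℝ)

theorem mem_verts_of_mem_leaves {x : V} (hx : x ∈ T.leaves) : x ∈ T.verts :=
  Finset.mem_of_mem_filter x hx

def Neutral (g g' : ↥T.verts × ↥T.edges) : Prop :=
  ∃ f, T.IsShapeIso g.2 g'.2 f ∧ (g.1 : V) ∈ T.clade g.2 ∧ f g.1 = g'.1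

noncomputable def scoreMap : (↥T.verts × ↥T.edges → ℝ) →ₗ[ℝ] ↥T.leaves → ℝ where
  toFun w x := ∑ e, w (⟨x, T.mem_verts_of_mem_leaves x.2⟩, e) * ℓ e
  map_add' w w' := by ext; simp [add_mul, Finset.sum_add_distrib]
  map_smul' c w := by ext; simp [mul_assoc, Finset.mul_sum]

-- `x` ranges over all vertices, not only leaves: a shape isomorphism is only known to send a
-- leaf to a vertex.
def divIndexCoeffs : Set (↥T.verts × ↥T.edges → ℝ) :=
  {w | (∀ g, 0 ≤ w g) ∧ (∀ g, (g.1 : V) ∉ T.clade g.2 → w g = 0) ∧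
    (∀ g g', T.Neutral g g' → w g = w g') ∧ ∑ x, T.scoreMap ℓ w x = T.PD ℓ T.leaves}

noncomputable def extendCoeffs (w : ↥T.verts × ↥T.edges → ℝ) (x e : V) : ℝ :=
  if h : x ∈ T.verts ∧ e ∈ T.edges then w (⟨x, h.1⟩, ⟨e, h.2⟩) else 0

variable {T ℓ}

theorem extendCoeffs_apply (w : ↥T.verts × ↥T.edges → ℝ) (g : ↥T.verts × ↥T.edges) :
    T.extendCoeffs w g.1 g.2 = w g := by
  simp [extendCoeffs]

theorem score_eq_scoreMap (γ : V → V → ℝ) (x : ↥T.leaves) :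
    T.score ℓ γ x = T.scoreMap ℓ (fun g => γ g.1 g.2) x := by
  rw [score, ← Finset.sum_coe_sort]
  rfl

theorem restrict_mem_divIndexCoeffs {γ : V → V → ℝ} (hγ : T.IsDivIndex ℓ γ) :
    (fun g => γ g.1 g.2) ∈ T.divIndexCoeffs ℓ := by
  obtain ⟨hnonneg, hdescent, hneutral, hconvex⟩ := hγ
  refine ⟨fun g => hnonneg _ _, fun g hg => hdescent _ _ g.2.2 hg, ?_, ?_⟩
  · rintro g g' ⟨f, hf, hx, hfx⟩
    show γ _ _ = γ _ _
    rw [← hfx]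
    exact hneutral _ g.2.2 _ g'.2.2 f hf _ hx
  · simp only [← score_eq_scoreMap, Finset.sum_coe_sort, hconvex]

theorem isDivIndex_extendCoeffs {w : ↥T.verts × ↥T.edges → ℝ} (hw : w ∈ T.divIndexCoeffs ℓ) :
    T.IsDivIndex ℓ (T.extendCoeffs w) := by
  obtain ⟨hnonneg, hdescent, hneutral, hconvex⟩ := hw
  refine ⟨fun x e => ?_, fun x e he hx => ?_, fun e₁ he₁ e₂ he₂ f hf x hx => ?_, ?_⟩
  · unfold extendCoeffs
    split_ifs
    exacts [hnonneg _, le_rfl]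
  · unfold extendCoeffs
    split_ifs
    exacts [hdescent _ hx, rfl]
  · have hxv : x ∈ T.verts := T.mem_verts_of_mem_leaves (Finset.mem_of_mem_filter x hx)
    have hxd : x ∈ T.desc e₁ := Finset.mem_filter.2 ⟨hxv, (Finset.mem_filter.1 hx).2⟩
    have hfxv : f x ∈ T.verts := Finset.mem_of_mem_filter _ (hf.2.1.mapsTo hxd)
    exact (extendCoeffs_apply w (⟨x, hxv⟩, ⟨e₁, he₁⟩)).trans <|
      (hneutral _ (⟨f x, hfxv⟩, ⟨e₂, he₂⟩) ⟨f, hf, hx, rfl⟩).trans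
        (extendCoeffs_apply w (⟨f x, hfxv⟩, ⟨e₂, he₂⟩)).symm
  · rw [← Finset.sum_coe_sort, ← hconvex]
    simp only [score_eq_scoreMap, extendCoeffs_apply]

theorem indexScores_eq_image_divIndexCoeffs :
    T.indexScores ℓ = T.scoreMap ℓ '' T.divIndexCoeffs ℓ := by
  ext s
  constructor
  · rintro ⟨γ, hγ, hs⟩
    exact ⟨_, restrict_mem_divIndexCoeffs hγ, funext fun x => (hs x ▸ score_eq_scoreMap γ x).symm⟩
  · rintro ⟨w, hw, rfl⟩
    refine ⟨_, isDivIndex_extendCoeffs hw, fun x => ?_⟩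
    simp only [score_eq_scoreMap, extendCoeffs_apply]

variable (T ℓ)

theorem isPolyhedron_divIndexCoeffs : IsPolyhedron (T.divIndexCoeffs ℓ) := by
  have hconvex : IsPolyhedron {w | ∑ x, T.scoreMap ℓ w x = T.PD ℓ T.leaves} := by
    have := (isPolyhedron_hyperplane 1 (T.PD ℓ T.leaves)).preimage (T.scoreMap ℓ)
    simpa only [Set.preimage_ofPred_eq, one_dotProduct] using this
  simp only [divIndexCoeffs, Set.ofPred_and, Set.ofPred_forall]
  refine .inter ?_ (.inter ?_ (.inter ?_ hconvex))
  · exact .iInter fun g => isPolyhedron_setOf_nonneg g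
  · exact .iInter fun g => .iInter fun _ => isPolyhedron_setOf_eq_zero g
  · exact .iInter fun g => .iInter fun g' => .iInter fun _ => isPolyhedron_setOf_eq g g'

variable {T ℓ}

theorem PD_nonneg (hℓ : ∀ e, 0 ≤ ℓ e) (Y : Finset V) : 0 ≤ T.PD ℓ Y :=
  Finset.sum_nonneg fun e _ => hℓ e

theorem score_nonneg (hℓ : ∀ e, 0 ≤ ℓ e) {γ : V → V → ℝ} (hγ : T.IsDivIndex ℓ γ) (x : V) :
    0 ≤ T.score ℓ γ x :=
  Finset.sum_nonneg fun e _ => mul_nonneg (hγ.1 x e) (hℓ e)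

theorem score_le_PD (hℓ : ∀ e, 0 ≤ ℓ e) {γ : V → V → ℝ} (hγ : T.IsDivIndex ℓ γ) {x : V}
    (hx : x ∈ T.leaves) : T.score ℓ γ x ≤ T.PD ℓ T.leaves := by
  rw [← hγ.2.2.2]
  exact Finset.single_le_sum (fun y _ => score_nonneg hℓ hγ y) hx

theorem indexScores_subset_Icc (hℓ : ∀ e, 0 ≤ ℓ e) :
    T.indexScores ℓ ⊆ Set.Icc 0 fun _ => T.PD ℓ T.leaves := by
  rintro s ⟨γ, hγ, hs⟩
  exact ⟨fun x => (hs x).symm ▸ score_nonneg hℓ hγ x, fun x => (hs x).symm ▸ score_le_PD hℓ hγ x.2⟩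

end PreTree

theorem indexScores_polytope_general {V : Type*} (T : PreTree V)
    (ℓ : V → ℝ) (hℓ : ∀ e, 0 ≤ ℓ e) :
    (∃ (m : ℕ) (a : Fin m → (↥T.leaves → ℝ)) (b : Fin m → ℝ),
        PreTree.indexScores T ℓ =
          ⋂ i : Fin m, {s : ↥T.leaves → ℝ | ∑ x : ↥T.leaves, a i x * s x ≤ b i}) ∧
    Bornology.IsBounded (PreTree.indexScores T ℓ) ∧
    (∀ x ∈ T.leaves, ∃ LB UB : ℝ, 0 ≤ LB ∧ 0 ≤ UB ∧
      ∀ γ : V → V → ℝ, T.IsDivIndex ℓ γ →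
        LB ≤ T.score ℓ γ x ∧ T.score ℓ γ x ≤ UB) := by
  refine ⟨?_, (Metric.isBounded_Icc _ _).subset (PreTree.indexScores_subset_Icc hℓ),
    fun x hx => ⟨0, T.PD ℓ T.leaves, le_rfl, PreTree.PD_nonneg hℓ _,
      fun γ hγ => ⟨PreTree.score_nonneg hℓ hγ x, PreTree.score_le_PD hℓ hγ hx⟩⟩⟩
  rw [PreTree.indexScores_eq_image_divIndexCoeffs]
  exact (T.isPolyhedron_divIndexCoeffs ℓ).image_linearMap _

/-- For a rooted binary phylogenetic `X`-tree `(T,ℓ)`, the set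
`P(T,ℓ) = {(φ(x₁),…,φ(xₙ)) : φ a diversity index of (T,ℓ)}` is a polytope in `ℝⁿ`
(a bounded intersection of finitely many closed half-spaces), and each coordinate admits
non-negative lower and upper bounds `LB(x,T)` and `UB(x,T)` valid for every diversity index. -/
theorem indexScores_polytope {V : Type*} (T : PreTree V) (hT : T.IsBinaryTree)
    (ℓ : V → ℝ) (hℓ : ∀ e, 0 ≤ ℓ e) :
    (∃ (m : ℕ) (a : Fin m → (↥T.leaves → ℝ)) (b : Fin m → ℝ),
        PreTree.indexScores T ℓ =
          ⋂ i : Fin m, {s : ↥T.leaves → ℝ | ∑ x : ↥T.leaves, a i x * s x ≤ b i}) ∧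
    Bornology.IsBounded (PreTree.indexScores T ℓ) ∧
    (∀ x ∈ T.leaves, ∃ LB UB : ℝ, 0 ≤ LB ∧ 0 ≤ UB ∧
      ∀ γ : V → V → ℝ, T.IsDivIndex ℓ γ →
        LB ≤ T.score ℓ γ x ∧ T.score ℓ γ x ≤ UB) :=
  indexScores_polytope_general T ℓ hℓ
end

section
/- Let (T,ℓ) be a rooted binary phylogenetic X-tree, let γ be the coefficients of a diversity index of (T,ℓ) satisfying the allocation property, and let v be an internal vertex of T. Then the restriction of γ to the taxa X[v] and the edges of the pendant subtree T[v] defines a diversity index of (T[v], ℓ): the restricted coefficients are non-negative, satisfy descent, neutrality and the allocation property on T[v], and Σ_{x∈X[v]} Σ_{e∈E(T[v])} γ(x,e)·ℓ(e) = PD_{(T[v],ℓ)}(X[v]). -/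
open scoped Classical

namespace PreTree

variable {V : Type*}

/-- The pendant subtree `T[v]` of `T`, rooted at `v`. -/
noncomputable def subtree (T : PreTree V) (v : V) : PreTree V where
  verts := T.verts.filter fun w => T.below w v
  root := v
  par := fun w => if w = v then v else T.par w

end PreTree

/-!
The restricted coefficients inherit non-negativity verbatim. Descent, neutrality and allocation
transfer because the pendant subtree `T[v]` has the same clades, pendant subtrees and parents as
`T` at every edge below `v`. Convexity is then automatic: by descent and allocation each edge `e`
distributes exactly `ℓ(e)` among the taxa, and allocation forces every edge to have a leaf below
it, so that `PD(X[v])` is the total edge length of `T[v]`.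
-/

namespace PreTree

variable {V : Type*} {T : PreTree V} {ℓ : V → ℝ} {γ : V → V → ℝ}

theorem below_refl (x : V) : T.below x x := ⟨0, rfl⟩

theorem below_trans {x y z : V} (hxy : T.below x y) (hyz : T.below y z) : T.below x z := by
  obtain ⟨m, rfl⟩ := hxy
  obtain ⟨n, rfl⟩ := hyz
  exact ⟨n + m, Function.iterate_add_apply _ _ _ _⟩

theorem below_par {x : V} : T.below x (T.par x) := ⟨1, rfl⟩

theorem eq_root_of_below_root (hT : T.IsTree) {w : V} (h : T.below T.root w) : w = T.root := by
  obtain ⟨n, rfl⟩ := h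
  exact Function.iterate_fixed hT.2.2.1 n

theorem eq_root_of_iterate_par_eq_self (hT : T.IsTree) {a : V} (ha : a ∈ T.verts) {m : ℕ}
    (hm : 0 < m) (h : T.par^[m] a = a) : a = T.root := by
  obtain ⟨N, hN⟩ := hT.2.2.2 a ha
  have hperiodic : Function.IsPeriodicPt T.par (m * N) a :=
    (show Function.IsPeriodicPt T.par m a from h).mul_const N
  have hN_le : N ≤ m * N := Nat.le_mul_of_pos_left N hm
  calc a = T.par^[m * N - N + N] a := by rw [Nat.sub_add_cancel hN_le, hperiodic.eq]
    _ = T.root := by rw [Function.iterate_add_apply, hN, Function.iterate_fixed hT.2.2.1]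

theorem below_antisymm (hT : T.IsTree) {a b : V} (ha : a ∈ T.verts)
    (hab : T.below a b) (hba : T.below b a) : a = b := by
  obtain ⟨p, hp⟩ := hab
  obtain ⟨q, hq⟩ := hba
  rcases Nat.eq_zero_or_pos (q + p) with hqp | hqp
  · rwa [show p = 0 by omega] at hp
  · have ha_root : a = T.root :=
      eq_root_of_iterate_par_eq_self hT ha hqp (by rw [Function.iterate_add_apply, hp, hq])
    rw [← hp, ha_root, Function.iterate_fixed hT.2.2.1]

section Subtree

variable {v : V}

theorem root_subtree : (T.subtree v).root = v := rfl

theorem par_subtree_self : (T.subtree v).par v = v := if_pos rfl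

theorem par_subtree_of_ne {w : V} (hw : w ≠ v) : (T.subtree v).par w = T.par w := if_neg hw

theorem mem_verts_subtree {x : V} : x ∈ (T.subtree v).verts ↔ x ∈ T.verts ∧ T.below x v := by
  simp [subtree]

theorem mem_edges_subtree {e : V} :
    e ∈ (T.subtree v).edges ↔ e ≠ v ∧ e ∈ T.verts ∧ T.below e v := by
  simp [edges, subtree]

theorem edges_subtree_subset (hT : T.IsTree) : (T.subtree v).edges ⊆ T.edges := by
  intro e he
  obtain ⟨hev, heV, hbelow⟩ := mem_edges_subtree.mp he
  refine Finset.mem_erase.mpr ⟨fun h => hev ?_, heV⟩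
  subst h
  exact (eq_root_of_below_root hT hbelow).symm

theorem below_of_below_subtree {x w : V} (h : (T.subtree v).below x w) : T.below x w := by
  obtain ⟨n, rfl⟩ := h
  induction n with
  | zero => exact below_refl x
  | succ n ih =>
    rw [Function.iterate_succ_apply']
    by_cases hv : (T.subtree v).par^[n] x = v
    · rwa [hv, par_subtree_self, ← hv]
    · rw [par_subtree_of_ne hv]
      exact below_trans ih below_par

theorem below_subtree_of_below (hT : T.IsTree) {x w : V} (hx : x ∈ T.verts)
    (hxw : T.below x w) (hwv : T.below w v) : (T.subtree v).below x w := by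
  obtain ⟨n, hn⟩ := hxw
  induction n generalizing x with
  | zero => exact hn ▸ below_refl x
  | succ n ih =>
    by_cases hxv : x = v
    · subst hxv
      rw [below_antisymm hT hx ⟨n + 1, hn⟩ hwv]
      exact below_refl _
    · obtain ⟨k, hk⟩ := ih (hT.2.1 x hx) hn
      exact ⟨k + 1, by rwa [Function.iterate_succ_apply, par_subtree_of_ne hxv]⟩

theorem below_subtree_iff (hT : T.IsTree) {x w : V} (hx : x ∈ T.verts) (hwv : T.below w v) :
    (T.subtree v).below x w ↔ T.below x w :=
  ⟨below_of_below_subtree, fun hxw => below_subtree_of_below hT hx hxw hwv⟩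

theorem children_subtree (hT : T.IsTree) {u : V} (hu : T.below u v) :
    (T.subtree v).children u = T.children u := by
  ext w
  simp only [children, Finset.mem_filter]
  rw [mem_verts_subtree, root_subtree]
  constructor
  · rintro ⟨⟨hwV, hwv_below⟩, hwv, hpar⟩
    rw [par_subtree_of_ne hwv] at hpar
    refine ⟨hwV, fun hroot => hwv ?_, hpar⟩
    rw [hroot] at hwv_below ⊢
    exact (eq_root_of_below_root hT hwv_below).symm
  · rintro ⟨hwV, hwroot, hpar⟩
    have hwu : T.below w u := hpar ▸ below_par
    have hwv : w ≠ v := by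
      rintro rfl
      have hwu_eq : w = u := below_antisymm hT hwV hwu hu
      exact hwroot (eq_root_of_iterate_par_eq_self hT hwV one_pos (hpar.trans hwu_eq.symm))
    exact ⟨⟨hwV, below_trans hwu hu⟩, hwv, by rw [par_subtree_of_ne hwv, hpar]⟩

theorem leaves_subtree (hT : T.IsTree) : (T.subtree v).leaves = T.clade v := by
  ext x
  simp only [leaves, clade, Finset.mem_filter, mem_verts_subtree]
  constructor
  · rintro ⟨⟨hxV, hxv⟩, hch⟩
    exact ⟨⟨hxV, children_subtree hT hxv ▸ hch⟩, hxv⟩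
  · rintro ⟨⟨hxV, hch⟩, hxv⟩
    exact ⟨⟨hxV, hxv⟩, (children_subtree hT hxv).symm ▸ hch⟩

theorem clade_subtree (hT : T.IsTree) {e : V} (he : e ∈ (T.subtree v).edges) :
    (T.subtree v).clade e = T.clade e := by
  have hev : T.below e v := (mem_edges_subtree.mp he).2.2
  ext x
  simp only [clade, leaves_subtree hT, Finset.mem_filter]
  constructor
  · rintro ⟨⟨hx, -⟩, hxe⟩
    exact ⟨hx, below_of_below_subtree hxe⟩
  · rintro ⟨hx, hxe⟩
    have hxV : x ∈ T.verts := (Finset.mem_filter.mp hx).1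
    exact ⟨⟨hx, below_trans hxe hev⟩, (below_subtree_iff hT hxV hev).mpr hxe⟩

theorem desc_subtree (hT : T.IsTree) {w : V} (hwv : T.below w v) :
    (T.subtree v).desc w = T.desc w := by
  ext u
  simp only [desc, mem_verts_subtree, Finset.mem_filter]
  constructor
  · rintro ⟨⟨huV, -⟩, huw⟩
    exact ⟨huV, below_of_below_subtree huw⟩
  · rintro ⟨huV, huw⟩
    exact ⟨⟨huV, below_trans huw hwv⟩, (below_subtree_iff hT huV hwv).mpr huw⟩

theorem par_subtree_of_below (hT : T.IsTree) {e w : V} (he : e ∈ (T.subtree v).edges)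
    (hwe : T.below w e) : (T.subtree v).par w = T.par w := by
  obtain ⟨hev, heV, hev_below⟩ := mem_edges_subtree.mp he
  refine par_subtree_of_ne fun hwv => hev ?_
  subst hwv
  exact below_antisymm hT heV hev_below hwe

theorem isShapeIso_of_subtree (hT : T.IsTree) {e₁ e₂ : V} {f : V → V}
    (h₁ : e₁ ∈ (T.subtree v).edges) (h₂ : e₂ ∈ (T.subtree v).edges)
    (hiso : (T.subtree v).IsShapeIso e₁ e₂ f) : T.IsShapeIso e₁ e₂ f := by
  obtain ⟨hfe, hbij, hpar⟩ := hiso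
  have hdesc₁ := desc_subtree hT (mem_edges_subtree.mp h₁).2.2
  have hdesc₂ := desc_subtree hT (mem_edges_subtree.mp h₂).2.2
  rw [hdesc₁, hdesc₂] at hbij
  rw [hdesc₁] at hpar
  refine ⟨hfe, hbij, fun w hw hwe => ?_⟩
  have hfw : f w ∈ T.desc e₂ := hbij.mapsTo hw
  rw [← par_subtree_of_below hT h₁ (Finset.mem_filter.mp hw).2,
    ← par_subtree_of_below hT h₂ (Finset.mem_filter.mp hfw).2]
  exact hpar w hw hwe

theorem Allocation.subtree (hT : T.IsTree) (halloc : T.Allocation γ) :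
    (T.subtree v).Allocation γ := fun e he => by
  rw [clade_subtree hT he]
  exact halloc e (edges_subtree_subset hT he)

end Subtree

section Convexity

variable {S : PreTree V}

theorem sum_score_eq_sum_edges (hdesc : ∀ x, ∀ e ∈ S.edges, x ∉ S.clade e → γ x e = 0)
    (halloc : S.Allocation γ) : ∑ x ∈ S.leaves, S.score ℓ γ x = ∑ e ∈ S.edges, ℓ e := by
  unfold score
  rw [Finset.sum_comm]
  refine Finset.sum_congr rfl fun e he => ?_
  have hclade : ∑ x ∈ S.leaves, γ x e = ∑ x ∈ S.clade e, γ x e :=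
    (Finset.sum_subset (Finset.filter_subset _ _) fun x _ hx => hdesc x e he hx).symm
  rw [← Finset.sum_mul, hclade, halloc e he, one_mul]

theorem PD_leaves_eq_sum_edges (halloc : S.Allocation γ) :
    S.PD ℓ S.leaves = ∑ e ∈ S.edges, ℓ e := by
  unfold PD
  rw [Finset.filter_true_of_mem]
  intro e he
  obtain ⟨x, hx⟩ := Finset.nonempty_of_sum_ne_zero ((halloc e he).symm ▸ one_ne_zero)
  exact ⟨x, (Finset.mem_filter.mp hx).1, (Finset.mem_filter.mp hx).2⟩

theorem isDivIndex_of_allocation (hnonneg : ∀ x e, 0 ≤ γ x e)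
    (hdesc : ∀ x, ∀ e ∈ S.edges, x ∉ S.clade e → γ x e = 0)
    (hneut : ∀ e₁ ∈ S.edges, ∀ e₂ ∈ S.edges, ∀ f : V → V, S.IsShapeIso e₁ e₂ f →
      ∀ x ∈ S.clade e₁, γ x e₁ = γ (f x) e₂)
    (halloc : S.Allocation γ) : S.IsDivIndex ℓ γ :=
  ⟨hnonneg, hdesc, hneut,
    (sum_score_eq_sum_edges hdesc halloc).trans (PD_leaves_eq_sum_edges halloc).symm⟩

end Convexity

end PreTree

theorem restriction_isDivIndex_general {V : Type*} (T : PreTree V) (hT : T.IsBinaryTree)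
    (ℓ : V → ℝ) (v : V) (γ : V → V → ℝ)
    (hγ : T.IsDivIndex ℓ γ) (halloc : T.Allocation γ) :
    (T.subtree v).IsDivIndex ℓ γ ∧ (T.subtree v).Allocation γ ∧
      ∑ x ∈ (T.subtree v).leaves, (T.subtree v).score ℓ γ x =
        ∑ e ∈ (T.subtree v).edges, ℓ e := by
  obtain ⟨hnonneg, hdesc, hneut, -⟩ := hγ
  have hTree := hT.1
  have hdesc' : ∀ x, ∀ e ∈ (T.subtree v).edges, x ∉ (T.subtree v).clade e → γ x e = 0 :=
    fun x e he hx => hdesc x e (PreTree.edges_subtree_subset hTree he)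
      (PreTree.clade_subtree hTree he ▸ hx)
  have hneut' : ∀ e₁ ∈ (T.subtree v).edges, ∀ e₂ ∈ (T.subtree v).edges, ∀ f : V → V,
      (T.subtree v).IsShapeIso e₁ e₂ f → ∀ x ∈ (T.subtree v).clade e₁, γ x e₁ = γ (f x) e₂ :=
    fun e₁ h₁ e₂ h₂ f hiso x hx =>
      hneut e₁ (PreTree.edges_subtree_subset hTree h₁) e₂
        (PreTree.edges_subtree_subset hTree h₂) f
        (PreTree.isShapeIso_of_subtree hTree h₁ h₂ hiso) x (PreTree.clade_subtree hTree h₁ ▸ hx)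
  have halloc' := halloc.subtree (v := v) hTree
  exact ⟨PreTree.isDivIndex_of_allocation hnonneg hdesc' hneut' halloc', halloc',
    PreTree.sum_score_eq_sum_edges hdesc' halloc'⟩

/-- For a diversity index of `(T,ℓ)` with the allocation property and an
internal vertex `v`, the restriction of its coefficients to the pendant subtree `T[v]` defines
a diversity index of `(T[v],ℓ)`: non-negativity, descent, neutrality and the allocation property
hold on `T[v]`, and `∑_{x∈X[v]} ∑_{e∈E(T[v])} γ(x,e)·ℓ(e) = PD_{(T[v],ℓ)}(X[v])`. -/
theorem restriction_isDivIndex {V : Type*} (T : PreTree V) (hT : T.IsBinaryTree)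
    (ℓ : V → ℝ) (hℓ : ∀ e, 0 ≤ ℓ e) (v : V) (hv : v ∈ T.verts)
    (hint : T.children v ≠ ∅) (γ : V → V → ℝ)
    (hγ : T.IsDivIndex ℓ γ) (halloc : T.Allocation γ) :
    (T.subtree v).IsDivIndex ℓ γ ∧ (T.subtree v).Allocation γ ∧
      ∑ x ∈ (T.subtree v).leaves, (T.subtree v).score ℓ γ x =
        ∑ e ∈ (T.subtree v).edges, ℓ e :=
  restriction_isDivIndex_general T hT ℓ v γ hγ halloc
end

section
/- Let (T,ℓ) be a rooted binary phylogenetic X-tree and let e be an internal edge of T (both endpoints internal vertices), with T/e the tree obtained from T by collapsing e. Then for every edge e_j = (u_j,v_j) of T with e_j ≠ e, the leaf set below v_j is the same in T and in T/e, so the Fair Proportion coefficients satisfy γ^{T}(x,e_j) = γ^{T/e}(x,e_j) = 1/|X[v_j]| for all x ∈ X[v_j]. Consequently, the symmetrized Kullback–Leibler divergence between the Fair Proportion coefficient distributions on each edge of T/e is zero, and since the Fair Proportion index is the unique 1-compatible diversity index on both T and T/e, the degree of discontinuity satisfies dd(T,ℓ,κ,1,e) = 0 for every κ. -/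
open scoped Classical

namespace PreTree

variable {V : Type*}

/-- The tree `T/e` obtained from `T` by collapsing the edge with head `e`. -/
noncomputable def collapse (T : PreTree V) (e : V) : PreTree V where
  verts := T.verts.erase e
  root := T.root
  par := fun w => if T.par w = e then T.par e else T.par w

/-- `e` is an interior edge of `T`: its head is an internal vertex. -/
def interiorEdge (T : PreTree V) (e : V) : Prop := e ∈ T.edges ∧ T.children e ≠ ∅

/-- A diversity index with coefficients `γ` is `θ`-compatible on `(T,ℓ)`. -/
def Compatible (T : PreTree V) (ℓ : V → ℝ) (γ : V → V → ℝ) (θ : ℝ) : Prop :=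
  ∃ δ : V → ℝ, (∀ x ∈ T.leaves, 0 ≤ δ x) ∧
    (∀ e ∈ T.edges, ∀ x ∈ T.clade e, ∀ y ∈ T.clade e, x ≠ y →
        (γ x e - γ y e) * ℓ e ≤ δ x) ∧
    ∑ x ∈ T.leaves, δ x ≤ (1 - θ) * T.PD ℓ T.leaves

/-- The Fair Proportion coefficients: `γ(x,(u,v)) = 1/|X[v]|` for `x ∈ X[v]`, else `0`. -/
noncomputable def FPγ (T : PreTree V) : V → V → ℝ := fun x e =>
  if x ∈ T.clade e then 1 / ((T.clade e).card : ℝ) else 0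

/-- The symmetrized Kullback–Leibler divergence between the distributions `p` and `q`
supported on `S`. -/
noncomputable def symKL (S : Finset V) (p q : V → ℝ) : ℝ :=
  (1 / 2) * ∑ x ∈ S, (p x * Real.log (p x / q x) + q x * Real.log (q x / p x))

/-! Collapsing `e` only reroutes the paths through `e` directly to `T.par e`, so the leaves
below every other vertex are unchanged, and so are the Fair Proportion coefficients. For `θ = 1`
all slacks `δ` vanish; with positive edge lengths this makes a `1`-compatible index constant on
each clade, and allocation then forces the constant `1/|X[v]|`. Hence both indices are Fair
Proportion and every divergence is `0`. -/

variable {T : PreTree V} {e : V}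

theorem IsTree.par_ne_self (hT : T.IsTree) {v : V} (hv : v ∈ T.verts) (hvr : v ≠ T.root) :
    T.par v ≠ v := fun hfix => by
  obtain ⟨n, hn⟩ := hT.2.2.2 v hv
  exact hvr (Function.iterate_fixed hfix n ▸ hn)

theorem mem_children {v w : V} :
    w ∈ T.children v ↔ w ∈ T.verts ∧ w ≠ T.root ∧ T.par w = v := Finset.mem_filter

theorem mem_leaves {v : V} : v ∈ T.leaves ↔ v ∈ T.verts ∧ T.children v = ∅ := Finset.mem_filter

theorem IsTree.par_ne_self_of_interiorEdge (hT : T.IsTree) (he : T.interiorEdge e) :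
    T.par e ≠ e :=
  hT.par_ne_self (Finset.mem_erase.mp he.1).2 (Finset.mem_erase.mp he.1).1

theorem mem_edges_collapse {ej : V} :
    ej ∈ (T.collapse e).edges ↔ ej ≠ e ∧ ej ∈ T.edges := by
  simp only [edges, collapse, Finset.mem_erase]
  tauto

theorem edges_collapse_subset : (T.collapse e).edges ⊆ T.edges :=
  fun _ hej => (mem_edges_collapse.mp hej).2

theorem collapse_par_of_par_eq {x : V} (hx : T.par x = e) :
    (T.collapse e).par x = T.par e := if_pos hx

theorem collapse_par_of_par_ne {x : V} (hx : T.par x ≠ e) :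
    (T.collapse e).par x = T.par x := if_neg hx

theorem below_collapse_of_below (hpe : T.par e ≠ e) {x ej : V} (hx : x ≠ e) (hej : ej ≠ e)
    (h : T.below x ej) : (T.collapse e).below x ej := by
  obtain ⟨n, hn⟩ := h
  induction n using Nat.strong_induction_on generalizing x with
  | _ n ih =>
    match n, hn with
    | 0, hn => exact ⟨0, hn⟩
    | n + 1, hn =>
      rw [Function.iterate_succ_apply] at hn
      by_cases hpx : T.par x = e
      · -- the steps `x → e → T.par e` merge into one step of `T/e`
        match n, hn with
        | 0, hn => exact absurd (hpx ▸ hn).symm hej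
        | m + 1, hn =>
          rw [hpx, Function.iterate_succ_apply] at hn
          obtain ⟨k, hk⟩ := ih m (by omega) hpe hn
          exact ⟨k + 1, by rwa [Function.iterate_succ_apply, collapse_par_of_par_eq hpx]⟩
      · obtain ⟨k, hk⟩ := ih n (by omega) hpx hn
        exact ⟨k + 1, by rwa [Function.iterate_succ_apply, collapse_par_of_par_ne hpx]⟩

theorem below_of_below_collapse (hpe : T.par e ≠ e) {x ej : V} (hx : x ≠ e)
    (h : (T.collapse e).below x ej) : T.below x ej := by
  obtain ⟨m, hm⟩ := h
  induction m generalizing x with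
  | zero => exact ⟨0, hm⟩
  | succ m ih =>
    rw [Function.iterate_succ_apply] at hm
    by_cases hpx : T.par x = e
    · rw [collapse_par_of_par_eq hpx] at hm
      obtain ⟨n, hn⟩ := ih hpe hm
      exact ⟨n + 2, by rwa [Function.iterate_add_apply, Function.iterate_succ_apply,
        Function.iterate_one, hpx]⟩
    · rw [collapse_par_of_par_ne hpx] at hm
      obtain ⟨n, hn⟩ := ih hpx hm
      exact ⟨n + 1, by rwa [Function.iterate_succ_apply]⟩

theorem ne_of_mem_leaves (he : T.interiorEdge e) {x : V} (hx : x ∈ T.leaves) : x ≠ e := by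
  rintro rfl
  exact he.2 (mem_leaves.mp hx).2

theorem mem_children_collapse {v w : V} : w ∈ (T.collapse e).children v ↔
    w ≠ e ∧ w ∈ T.verts ∧ w ≠ T.root ∧ (if T.par w = e then T.par e else T.par w) = v := by
  rw [mem_children]
  show w ∈ T.verts.erase e ∧ _ ↔ _
  rw [Finset.mem_erase, and_assoc]
  rfl

theorem children_collapse_nonempty_iff (hT : T.IsTree) (he : T.interiorEdge e) {v : V}
    (hv : v ≠ e) : ((T.collapse e).children v).Nonempty ↔ (T.children v).Nonempty := by
  obtain ⟨her, hev⟩ := Finset.mem_erase.mp he.1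
  have hpe := hT.par_ne_self_of_interiorEdge he
  simp only [Finset.Nonempty, mem_children_collapse]
  simp only [mem_children]
  constructor
  · rintro ⟨w, -, hw, hwr, hpw⟩
    split_ifs at hpw
    · exact ⟨e, hev, her, hpw⟩
    · exact ⟨w, hw, hwr, hpw⟩
  · rintro ⟨w, hw, hwr, rfl⟩
    by_cases hwe : w = e
    · -- `e` is replaced by its own children, of which there is at least one
      obtain ⟨c, hc⟩ := Finset.nonempty_iff_ne_empty.mpr he.2
      obtain ⟨hcv, hcr, hpc⟩ := mem_children.mp hc
      exact ⟨c, fun hce => hpe (hce ▸ hpc), hcv, hcr, by rw [if_pos hpc, hwe]⟩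
    · exact ⟨w, hwe, hw, hwr, if_neg hv⟩

theorem leaves_collapse (hT : T.IsTree) (he : T.interiorEdge e) :
    (T.collapse e).leaves = T.leaves := by
  ext v
  by_cases hv : v = e
  · subst hv
    exact iff_of_false (fun h => (Finset.mem_erase.mp (mem_leaves.mp h).1).1 rfl)
      fun h => ne_of_mem_leaves he h rfl
  · have hch := (children_collapse_nonempty_iff hT he hv).not
    simp only [Finset.not_nonempty_iff_eq_empty] at hch
    rw [mem_leaves, mem_leaves, hch]
    exact and_congr_left' (Finset.mem_erase.trans (and_iff_right hv))

theorem clade_collapse (hT : T.IsTree) (he : T.interiorEdge e) {ej : V}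
    (hej : ej ∈ (T.collapse e).edges) : (T.collapse e).clade ej = T.clade ej := by
  have hpe := hT.par_ne_self_of_interiorEdge he
  have hej' := (mem_edges_collapse.mp hej).1
  ext x
  simp only [clade, Finset.mem_filter, leaves_collapse hT he]
  refine and_congr_right fun hx => ?_
  exact ⟨below_of_below_collapse hpe (ne_of_mem_leaves he hx),
    below_collapse_of_below hpe (ne_of_mem_leaves he hx) hej'⟩

theorem FPγ_of_mem_clade {x v : V} (hx : x ∈ T.clade v) :
    T.FPγ x v = 1 / ((T.clade v).card : ℝ) := if_pos hx

theorem FPγ_collapse (hT : T.IsTree) (he : T.interiorEdge e) {ej : V}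
    (hej : ej ∈ (T.collapse e).edges) (x : V) : (T.collapse e).FPγ x ej = T.FPγ x ej := by
  simp only [FPγ, clade_collapse hT he hej]

theorem Compatible.coeff_eq_of_one {ℓ : V → ℝ} {γ : V → V → ℝ} (hcomp : T.Compatible ℓ γ 1)
    {ej : V} (hej : ej ∈ T.edges) (hℓ : 0 < ℓ ej) {x y : V} (hx : x ∈ T.clade ej)
    (hy : y ∈ T.clade ej) : γ x ej = γ y ej := by
  obtain ⟨δ, hδ0, hδ, hδsum⟩ := hcomp
  -- with `θ = 1` the slacks are non-negative and sum to at most `0`, hence all vanish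
  have hδz : ∀ z ∈ T.leaves, δ z = 0 := (Finset.sum_eq_zero_iff_of_nonneg hδ0).mp
    (le_antisymm (by simpa using hδsum) (Finset.sum_nonneg hδ0))
  have hleaves : T.clade ej ⊆ T.leaves := Finset.filter_subset _ _
  rcases eq_or_ne x y with rfl | hxy
  · rfl
  have hxy_le := hδ ej hej x hx y hy hxy
  have hyx_le := hδ ej hej y hy x hx hxy.symm
  rw [hδz x (hleaves hx)] at hxy_le
  rw [hδz y (hleaves hy)] at hyx_le
  nlinarith

theorem Compatible.eq_FPγ_of_one {ℓ : V → ℝ} {γ : V → V → ℝ} (hcomp : T.Compatible ℓ γ 1)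
    (halloc : T.Allocation γ) {ej : V} (hej : ej ∈ T.edges) (hℓ : 0 < ℓ ej) {x : V}
    (hx : x ∈ T.clade ej) : γ x ej = T.FPγ x ej := by
  have hsum := halloc ej hej
  rw [Finset.sum_congr rfl fun y hy => hcomp.coeff_eq_of_one hej hℓ hy hx, Finset.sum_const,
    nsmul_eq_mul] at hsum
  rw [FPγ_of_mem_clade hx, eq_one_div_of_mul_eq_one_right hsum]

theorem symKL_eq_zero_of_eqOn {S : Finset V} {p q : V → ℝ} (h : Set.EqOn p q S) :
    symKL S p q = 0 := by
  rw [symKL, Finset.sum_eq_zero, mul_zero]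
  intro x hx
  rw [h hx]
  by_cases hq : q x = 0
  · simp [hq]
  · rw [div_self hq, Real.log_one, mul_zero, add_zero]

end PreTree

/-- Collapsing an internal edge `e` leaves the clade below the head of every
other edge unchanged, so the Fair Proportion coefficients agree on `T` and `T/e`; hence the
symmetrized Kullback–Leibler divergence between the Fair Proportion coefficient distributions
on each edge of `T/e` vanishes, and — since the Fair Proportion index is the unique
`1`-compatible diversity index on both `T` and `T/e` — the degree of discontinuity
`dd(T,ℓ,κ,1,e)`, computed from any `1`-compatible diversity indices on `(T,ℓ)` and `(T/e,ℓ)`,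
is zero for every `κ`. -/
theorem degree_of_discontinuity_theta_one_eq_zero {V : Type*} (T : PreTree V)
    (hT : T.IsBinaryTree) (ℓ : V → ℝ) (hℓ : ∀ f ∈ T.edges, 0 < ℓ f)
    (e : V) (he : T.interiorEdge e) :
    (∀ ej ∈ (T.collapse e).edges, (T.collapse e).clade ej = T.clade ej) ∧
    (∀ ej ∈ (T.collapse e).edges, ∀ x ∈ T.clade ej,
        PreTree.FPγ T x ej = 1 / ((T.clade ej).card : ℝ) ∧
        PreTree.FPγ (T.collapse e) x ej = PreTree.FPγ T x ej) ∧
    (∑ ej ∈ (T.collapse e).edges,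
        PreTree.symKL ((T.collapse e).clade ej) (fun x => PreTree.FPγ T x ej)
          (fun x => PreTree.FPγ (T.collapse e) x ej) = 0) ∧
    (∀ γ₁ γ₂ : V → V → ℝ,
      T.IsDivIndex ℓ γ₁ → T.Allocation γ₁ → PreTree.Compatible T ℓ γ₁ 1 →
      (T.collapse e).IsDivIndex ℓ γ₂ → (T.collapse e).Allocation γ₂ →
      PreTree.Compatible (T.collapse e) ℓ γ₂ 1 →
      ∑ ej ∈ (T.collapse e).edges,
          PreTree.symKL ((T.collapse e).clade ej) (fun x => γ₁ x ej)
            (fun x => γ₂ x ej) = 0) := by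
  have hclade := fun ej (hej : ej ∈ (T.collapse e).edges) => PreTree.clade_collapse hT.1 he hej
  refine ⟨hclade, fun ej hej x hx =>
    ⟨PreTree.FPγ_of_mem_clade hx, PreTree.FPγ_collapse hT.1 he hej x⟩, ?_, ?_⟩
  · exact Finset.sum_eq_zero fun ej hej => PreTree.symKL_eq_zero_of_eqOn fun x _ =>
      (PreTree.FPγ_collapse hT.1 he hej x).symm
  · intro γ₁ γ₂ _ halloc₁ hcomp₁ _ halloc₂ hcomp₂
    refine Finset.sum_eq_zero fun ej hej => PreTree.symKL_eq_zero_of_eqOn fun x hx => ?_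
    have hℓej := hℓ ej (PreTree.edges_collapse_subset hej)
    have hx' : x ∈ T.clade ej := hclade ej hej ▸ hx
    simp only [hcomp₁.eq_FPγ_of_one halloc₁ (PreTree.edges_collapse_subset hej) hℓej hx',
      hcomp₂.eq_FPγ_of_one halloc₂ hej hℓej hx, PreTree.FPγ_collapse hT.1 he hej]
end
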